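/- Assume the training data is noiseless, i.e. Y = G·P, and let α ≥ 0, β ≥ 0. Define the linear model-constrained decoder (mcDecoder) loss J(We, be, Wd, bd) = (1/2)·‖P − Wd·(We·P + be·𝟙ᵀ) − bd·𝟙ᵀ‖² + (α/2)·‖Y − We·P − be·𝟙ᵀ‖² + (β/2)·‖Y − G·Wd·(We·P + be·𝟙ᵀ) − G·bd·𝟙ᵀ‖², for We ∈ ℝ^{n×m}, be ∈ ℝ^n, Wd ∈ ℝ^{m×n}, bd ∈ ℝ^m. If Wd₀ ∈ ℝ^{m×n} satisfies Wd₀·G = I_m, then J(G, 0, Wd₀, 0) = 0; consequently, since J is nonnegative, the point (We, be, Wd, bd) = (G, 0, Wd₀, 0) is a global minimizer of J and hence a stationary point of J (the Fréchet derivative of J vanishes there). -/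

import Mathlib

open Matrix

attribute [local instance] Matrix.seminormedAddCommGroup Matrix.normedAddCommGroup
  Matrix.normedSpace

/-- Squared Frobenius norm of a real matrix: `‖X‖² = tr(Xᵀ X)`. -/
noncomputable def frobSq {k l : ℕ} (X : Matrix (Fin k) (Fin l) ℝ) : ℝ :=
  Matrix.trace (Xᵀ * X)

/-! At `(G, 0, Wd₀, 0)` the reconstruction gives `Wd₀ (G P) = P` and the encoder gives `G P = Y`,
so all three residuals vanish and the nonnegative loss attains its minimum `0`. The loss is
composed of bilinear maps between finite-dimensional spaces, hence differentiable, and a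
differentiable function has zero derivative at a minimum. -/

theorem LinearMap.differentiable_apply₂
    {𝕜 : Type*} [NontriviallyNormedField 𝕜] [CompleteSpace 𝕜]
    {E F G H : Type*} [NormedAddCommGroup E] [NormedSpace 𝕜 E]
    [NormedAddCommGroup F] [NormedSpace 𝕜 F] [FiniteDimensional 𝕜 F]
    [NormedAddCommGroup G] [NormedSpace 𝕜 G] [FiniteDimensional 𝕜 G]
    [NormedAddCommGroup H] [NormedSpace 𝕜 H]
    (B : F →ₗ[𝕜] G →ₗ[𝕜] H) {f : E → F} {g : E → G}
    (hf : Differentiable 𝕜 f) (hg : Differentiable 𝕜 g) :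
    Differentiable 𝕜 fun x => B (f x) (g x) :=
  (B.toContinuousBilinearMap.differentiable.comp hf).clm_apply hg

section MatrixCalculus

variable {𝕜 : Type*} [NontriviallyNormedField 𝕜] [CompleteSpace 𝕜]
  {E : Type*} [NormedAddCommGroup E] [NormedSpace 𝕜 E]
  {l m n : Type*} [Fintype l] [Fintype m] [Fintype n]

@[fun_prop]
theorem Differentiable.matrix_mul {f : E → Matrix l m 𝕜} {g : E → Matrix m n 𝕜}
    (hf : Differentiable 𝕜 f) (hg : Differentiable 𝕜 g) :
    Differentiable 𝕜 fun x => f x * g x :=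
  (mulLinearMap 𝕜).differentiable_apply₂ hf hg

@[fun_prop]
theorem Differentiable.vecMulVec {f : E → m → 𝕜} {g : E → n → 𝕜}
    (hf : Differentiable 𝕜 f) (hg : Differentiable 𝕜 g) :
    Differentiable 𝕜 fun x => vecMulVec (f x) (g x) :=
  (vecMulVecBilin 𝕜 𝕜).differentiable_apply₂ hf hg

@[fun_prop]
theorem Differentiable.matrix_transpose {f : E → Matrix m n 𝕜} (hf : Differentiable 𝕜 f) :
    Differentiable 𝕜 fun x => (f x)ᵀ :=
  (transposeLinearEquiv m n 𝕜 𝕜).toLinearMap.toContinuousLinearMap.differentiable.comp hf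

@[fun_prop]
theorem Differentiable.matrix_trace {f : E → Matrix n n 𝕜} (hf : Differentiable 𝕜 f) :
    Differentiable 𝕜 fun x => (f x).trace :=
  (traceLinearMap n 𝕜 𝕜).toContinuousLinearMap.differentiable.comp hf

end MatrixCalculus

theorem frobSq_nonneg {k l : ℕ} (X : Matrix (Fin k) (Fin l) ℝ) : 0 ≤ frobSq X := by
  simpa [frobSq, conjTranspose_eq_transpose_of_trivial] using
    (posSemidef_conjTranspose_mul_self X).trace_nonneg

@[fun_prop]
theorem Differentiable.frobSq {E : Type*} [NormedAddCommGroup E] [NormedSpace ℝ E] {k l : ℕ}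
    {f : E → Matrix (Fin k) (Fin l) ℝ} (hf : Differentiable ℝ f) :
    Differentiable ℝ fun x => frobSq (f x) := by
  unfold _root_.frobSq
  fun_prop

theorem mcDecoder_stationary_point_general
    {m n nt : ℕ}
    (P : Matrix (Fin m) (Fin nt) ℝ) (G : Matrix (Fin n) (Fin m) ℝ)
    (Y : Matrix (Fin n) (Fin nt) ℝ) (hY : Y = G * P)
    (α β : ℝ) (hα : 0 ≤ α) (hβ : 0 ≤ β)
    (J : Matrix (Fin n) (Fin m) ℝ × (Fin n → ℝ) ×
         Matrix (Fin m) (Fin n) ℝ × (Fin m → ℝ) → ℝ)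
    (hJ : ∀ We be Wd bd, J (We, be, Wd, bd) =
      (1 / 2) * frobSq (P - Wd * (We * P + vecMulVec be 1) - vecMulVec bd 1) +
      (α / 2) * frobSq (Y - We * P - vecMulVec be 1) +
      (β / 2) * frobSq (Y - G * Wd * (We * P + vecMulVec be 1)
        - G * vecMulVec bd 1))
    (Wd0 : Matrix (Fin m) (Fin n) ℝ) (hWd0 : Wd0 * G = 1) :
    J (G, 0, Wd0, 0) = 0 ∧
    (∀ p, J (G, 0, Wd0, 0) ≤ J p) ∧
    HasFDerivAt J (0 : _ →L[ℝ] ℝ) (G, 0, Wd0, 0) := by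
  have hdecode : Wd0 * (G * P) = P := by rw [← Matrix.mul_assoc, hWd0, Matrix.one_mul]
  have hzero : J (G, 0, Wd0, 0) = 0 := by
    simp [hJ, hY, Matrix.mul_assoc, hdecode, frobSq]
  have hmin : ∀ p, J (G, 0, Wd0, 0) ≤ J p := by
    rintro ⟨We, be, Wd, bd⟩
    rw [hzero, hJ]
    have := frobSq_nonneg (P - Wd * (We * P + vecMulVec be 1) - vecMulVec bd 1)
    have := frobSq_nonneg (Y - We * P - vecMulVec be 1)
    have := frobSq_nonneg (Y - G * Wd * (We * P + vecMulVec be 1) - G * vecMulVec bd 1)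
    positivity
  have hJ_eq : J = fun p =>
      (1 / 2) * frobSq (P - p.2.2.1 * (p.1 * P + vecMulVec p.2.1 1) - vecMulVec p.2.2.2 1) +
      (α / 2) * frobSq (Y - p.1 * P - vecMulVec p.2.1 1) +
      (β / 2) * frobSq (Y - G * p.2.2.1 * (p.1 * P + vecMulVec p.2.1 1)
        - G * vecMulVec p.2.2.2 1) :=
    funext fun ⟨We, be, Wd, bd⟩ => hJ We be Wd bd
  have hdiff : Differentiable ℝ J := by
    rw [hJ_eq]
    fun_prop
  have hlocal : IsLocalMin J (G, 0, Wd0, 0) := .of_forall hmin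
  exact ⟨hzero, hmin, hlocal.fderiv_eq_zero ▸ (hdiff _).hasFDerivAt⟩

/-- For noiseless data `Y = G P`, if `Wd₀ G = I` then `(G, 0, Wd₀, 0)` attains
zero loss in the mcDecoder formulation, hence is a global minimizer and a
stationary point. -/
theorem mcDecoder_stationary_point
    {m n nt : ℕ} (hm : 0 < m) (hn : 0 < n) (hnt : 0 < nt)
    (P : Matrix (Fin m) (Fin nt) ℝ) (G : Matrix (Fin n) (Fin m) ℝ)
    (Y : Matrix (Fin n) (Fin nt) ℝ) (hY : Y = G * P)
    (α β : ℝ) (hα : 0 ≤ α) (hβ : 0 ≤ β)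
    (J : Matrix (Fin n) (Fin m) ℝ × (Fin n → ℝ) ×
         Matrix (Fin m) (Fin n) ℝ × (Fin m → ℝ) → ℝ)
    (hJ : ∀ We be Wd bd, J (We, be, Wd, bd) =
      (1 / 2) * frobSq (P - Wd * (We * P + vecMulVec be 1) - vecMulVec bd 1) +
      (α / 2) * frobSq (Y - We * P - vecMulVec be 1) +
      (β / 2) * frobSq (Y - G * Wd * (We * P + vecMulVec be 1)
        - G * vecMulVec bd 1))
    (Wd0 : Matrix (Fin m) (Fin n) ℝ) (hWd0 : Wd0 * G = 1) :
    J (G, 0, Wd0, 0) = 0 ∧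
    (∀ p, J (G, 0, Wd0, 0) ≤ J p) ∧
    HasFDerivAt J (0 : _ →L[ℝ] ℝ) (G, 0, Wd0, 0) :=
  mcDecoder_stationary_point_general P G Y hY α β hα hβ J hJ Wd0 hWd0
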